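/- Assume G_Δ is a tree. Then the following are equivalent: (i) Δ^{(F,G)} is connected in codimension one for all facets F, G of Δ; (ii) whenever F = L_1, L_2, …, L_s = G is the unique path in G_Δ between two facets F and G, one has L_i ∩ L_k ⊆ L_j for all 1 ≤ i ≤ j ≤ k ≤ s; (iii) Δ is shellable. -/

import Mathlib

open Finset

/-- The facet graph `G_Δ` of a pure simplicial complex with facets `Fc i`, all of
cardinality `c`: two facets are adjacent iff they are connected in codimension one,
i.e. their intersection has cardinality `c - 1`. -/
def facetGraph {n m : ℕ} (Fc : Fin m → Finset (Fin n)) (c : ℕ) : SimpleGraph (Fin m) where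
  Adj i j := i ≠ j ∧ (Fc i ∩ Fc j).card + 1 = c
  symm := by
    constructor
    intro i j h
    exact ⟨h.1.symm, by rw [Finset.inter_comm]; exact h.2⟩
  loopless := by constructor; intro i h; exact h.1 rfl

/-- Shellability of a pure simplicial complex with facets `Fc i`: there is an ordering
`Fc (σ 0), …, Fc (σ (m-1))` of the facets such that for every `b ≥ 1` the subcomplex
`⟨Fc (σ 0), …, Fc (σ (b-1))⟩ ∩ ⟨Fc (σ b)⟩` is pure of dimension `|Fc (σ b)| - 2`;
equivalently (the standard reformulation), for all `a < b` there is `c < b` with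
`Fc (σ a) ∩ Fc (σ b) ⊆ Fc (σ c) ∩ Fc (σ b)` and `|Fc (σ c) ∩ Fc (σ b)| = |Fc (σ b)| - 1`. -/
def Shellable {n m : ℕ} (Fc : Fin m → Finset (Fin n)) : Prop :=
  ∃ σ : Equiv.Perm (Fin m), ∀ a b : Fin m, a < b → ∃ c : Fin m, c < b ∧
    Fc (σ a) ∩ Fc (σ b) ⊆ Fc (σ c) ∩ Fc (σ b) ∧
    (Fc (σ c) ∩ Fc (σ b)).card + 1 = (Fc (σ b)).card

/-! When `G_Δ` is a tree, each of the three conditions is equivalent to the running intersection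
property: `F ∩ G ⊆ L` for every facet `L` on the path from `F` to `G`. A vertex set of a tree
induces a connected subgraph iff it contains the path between any two of its vertices; applied to
`{L | F ∩ G ⊆ L}` this gives (i) ⇔ (ii).

For (ii) ⇒ (iii), order the facets by their distance from a root. The path from an earlier facet
`F` to a later facet `G` then only visits facets up to `G`, so its penultimate facet is an earlier
neighbour of `G` containing `F ∩ G`. For (iii) ⇒ (ii), induct along the shelling order: if `H` is
the earlier neighbour of `G` that the shelling provides for `F`, the path from `F` to `G` is
contained in the path from `F` to `H` followed by the edge `HG`, and `F ∩ G ⊆ F ∩ H`. -/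

namespace SimpleGraph

variable {V α : Type*} {G : SimpleGraph V}

open Walk

lemma IsAcyclic.support_subset_support (hG : G.IsAcyclic) {u v : V} {p : G.Walk u v}
    (hp : p.IsPath) (q : G.Walk u v) : p.support ⊆ q.support := by
  classical
  have hpq : p = q.bypass :=
    congrArg Subtype.val ((hG.subsingleton_path u v).elim ⟨p, hp⟩ ⟨q.bypass, q.bypass_isPath⟩)
  exact hpq ▸ q.support_bypass_subset_support

lemma Connected.exists_walk_dist_lt (hG : G.Connected) (r v : V) :
    ∃ p : G.Walk r v, ∀ w ∈ p.support, w = v ∨ G.dist r w < G.dist r v := by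
  obtain ⟨p, -, hlen⟩ := hG.exists_path_of_dist r v
  refine ⟨p, fun w hw => ?_⟩
  obtain ⟨k, rfl, hk⟩ := mem_support_iff_exists_getVert.mp hw
  rcases hk.eq_or_lt with rfl | hk
  · exact .inl p.getVert_length
  · refine .inr (lt_of_le_of_lt ?_ (hlen ▸ hk))
    exact (dist_le (p.take k)).trans (by simp)

lemma IsTree.connected_induce_iff (hG : G.IsTree) {s : Set V} :
    (G.induce s).Connected ↔
      s.Nonempty ∧ ∀ u ∈ s, ∀ v ∈ s, ∀ p : G.Walk u v, p.IsPath → ∀ w ∈ p.support, w ∈ s := by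
  refine ⟨fun hs => ⟨?_, fun u hu v hv p hp w hw => ?_⟩, fun ⟨⟨u, hu⟩, hs⟩ => ?_⟩
  · obtain ⟨⟨u, hu⟩⟩ := hs.nonempty
    exact ⟨u, hu⟩
  · obtain ⟨q⟩ := hs.preconnected ⟨u, hu⟩ ⟨v, hv⟩
    have hw' : w ∈ (q.map (Embedding.induce s).toHom).support :=
      hG.isAcyclic.support_subset_support hp _ hw
    rw [Walk.support_map, List.mem_map] at hw'
    obtain ⟨⟨w, hws⟩, -, rfl⟩ := hw'
    exact hws
  · rw [connected_iff_exists_forall_reachable]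
    refine ⟨⟨u, hu⟩, fun ⟨v, hv⟩ => ?_⟩
    obtain ⟨p, hp, -⟩ := hG.existsUnique_path u v
    exact (p.induce s (hs u hu v hv p hp)).reachable

lemma IsTree.support_subset_of_monotone_dist {ι : Type*} [LinearOrder ι] (hG : G.IsTree)
    {r : V} {σ : ι ≃ V} (hσ : Monotone (G.dist r ∘ σ)) {a b : ι} (hab : a ≤ b)
    {p : G.Walk (σ a) (σ b)} (hp : p.IsPath) {w : V} (hw : w ∈ p.support) : σ.symm w ≤ b := by
  have hroot : ∀ v, σ.symm v ≤ b → ∃ q : G.Walk r v, ∀ x ∈ q.support, σ.symm x ≤ b := by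
    intro v hv
    obtain ⟨q, hq⟩ := hG.connected.exists_walk_dist_lt r v
    refine ⟨q, fun x hx => ?_⟩
    rcases hq x hx with rfl | hlt
    · exact hv
    · by_contra! hbx
      have h₁ := hσ hbx.le
      have h₂ := hσ hv
      simp only [Function.comp_apply, Equiv.apply_symm_apply] at h₁ h₂
      omega
  obtain ⟨qa, hqa⟩ := hroot (σ a) (by simpa using hab)
  obtain ⟨qb, hqb⟩ := hroot (σ b) (by simp)
  have hw' := hG.isAcyclic.support_subset_support hp (qa.reverse.append qb) hw
  rw [mem_support_append_iff, support_reverse, List.mem_reverse] at hw'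
  exact hw'.elim (hqa w) (hqb w)

variable [DecidableEq α] (G) in
def RunningIntersection (f : V → Finset α) (u v : V) : Prop :=
  ∀ p : G.Walk u v, p.IsPath → ∀ w ∈ p.support, f u ∩ f v ⊆ f w

variable [DecidableEq α] {f : V → Finset α}

lemma RunningIntersection.symm {u v : V} (h : G.RunningIntersection f u v) :
    G.RunningIntersection f v u := by
  intro p hp w hw
  rw [inter_comm]
  exact h p.reverse hp.reverse w (by rwa [support_reverse, List.mem_reverse])

lemma runningIntersection_self (u : V) : G.RunningIntersection f u u := by
  intro p hp w hw
  rw [nil_iff_support_eq.mp (isPath_iff_nil.mp hp), List.mem_singleton] at hw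
  simp [hw]

lemma IsTree.runningIntersection_of_adj (hG : G.IsTree) {u x v : V}
    (hux : G.RunningIntersection f u x) (hxv : G.Adj x v) (hsub : f u ∩ f v ⊆ f x) :
    G.RunningIntersection f u v := by
  intro p hp w hw
  obtain ⟨q, hq, -⟩ := hG.existsUnique_path u x
  have hw' := hG.isAcyclic.support_subset_support hp (q.concat hxv) hw
  rw [support_concat, List.mem_append, List.mem_singleton] at hw'
  rcases hw' with hw' | rfl
  · exact (subset_inter inter_subset_left hsub).trans (hux q hq w hw')
  · exact inter_subset_right

lemma IsTree.connected_induce_iff_runningIntersection (hG : G.IsTree) :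
    (∀ a b, (G.induce {i | f a ∩ f b ⊆ f i}).Connected) ↔
      ∀ u v, G.RunningIntersection f u v := by
  simp only [hG.connected_induce_iff]
  refine ⟨fun h u v p hp w hw => ?_, fun h a b => ⟨⟨a, inter_subset_left⟩, ?_⟩⟩
  · exact (h u v).2 u inter_subset_left v inter_subset_right p hp w hw
  · intro u hu v hv p hp w hw
    exact (subset_inter hu hv).trans (h u v p hp w hw)

lemma forall_runningIntersection_iff_getVert :
    (∀ u v, G.RunningIntersection f u v) ↔
      ∀ (a b : V) (p : G.Walk a b), p.IsPath → ∀ x y z : ℕ, x ≤ y → y ≤ z → z ≤ p.length →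
        f (p.getVert x) ∩ f (p.getVert z) ⊆ f (p.getVert y) := by
  refine ⟨fun h a b p hp x y z hxy hyz _ => ?_, fun h u v p hp w hw => ?_⟩
  · have := h _ _ ((p.take z).drop x) ((hp.take z).drop x) _ (getVert_mem_support _ (y - x))
    simpa [take_getVert, min_eq_right (hxy.trans hyz), Nat.add_sub_cancel' hxy,
      min_eq_right hyz] using this
  · obtain ⟨k, rfl, hk⟩ := mem_support_iff_exists_getVert.mp hw
    simpa using h u v p hp 0 k p.length k.zero_le hk le_rfl

end SimpleGraph

open SimpleGraph

section Shelling

variable {n m c : ℕ} {Fc : Fin m → Finset (Fin n)}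

theorem shellable_of_runningIntersection (hpure : ∀ i, (Fc i).card = c)
    (htree : (facetGraph Fc c).IsTree)
    (hRI : ∀ u v, (facetGraph Fc c).RunningIntersection Fc u v) : Shellable Fc := by
  obtain ⟨r⟩ := htree.connected.nonempty
  let σ := Tuple.sort ((facetGraph Fc c).dist r)
  refine ⟨σ, fun a b hab => ?_⟩
  obtain ⟨p, hp, -⟩ := htree.existsUnique_path (σ a) (σ b)
  have hadj := p.adj_penultimate (Walk.not_nil_of_ne (σ.injective.ne hab.ne))
  have hmem : p.penultimate ∈ p.support := p.getVert_mem_support _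
  have hle := htree.support_subset_of_monotone_dist (Tuple.monotone_sort _) hab.le hp hmem
  refine ⟨σ.symm p.penultimate, hle.lt_of_ne ?_, ?_, ?_⟩
  · exact fun h => hadj.ne (σ.symm_apply_eq.mp h)
  · rw [Equiv.apply_symm_apply]
    exact subset_inter (hRI _ _ p hp _ hmem) inter_subset_right
  · rw [Equiv.apply_symm_apply, hpure]
    exact hadj.2

theorem runningIntersection_of_shellable (hpure : ∀ i, (Fc i).card = c)
    (htree : (facetGraph Fc c).IsTree) (hshell : Shellable Fc) :
    ∀ u v, (facetGraph Fc c).RunningIntersection Fc u v := by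
  obtain ⟨σ, hσ⟩ := hshell
  have hordered : ∀ b a, a ≤ b → (facetGraph Fc c).RunningIntersection Fc (σ a) (σ b) := by
    intro b
    induction b using WellFoundedLT.induction with
    | _ b ih =>
    intro a hab
    rcases hab.eq_or_lt with rfl | hab
    · exact runningIntersection_self _
    obtain ⟨d, hdb, hsub, hcard⟩ := hσ a b hab
    have hadj : (facetGraph Fc c).Adj (σ d) (σ b) :=
      ⟨fun h => by simp [h] at hcard, by rwa [← hpure (σ b)]⟩
    refine htree.runningIntersection_of_adj ?_ hadj (hsub.trans inter_subset_left)
    rcases le_total a d with had | hda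
    · exact ih d hdb a had
    · exact (ih a hab d hda).symm
  intro u v
  rcases le_total (σ.symm u) (σ.symm v) with h | h
  · simpa using hordered _ _ h
  · simpa using (hordered _ _ h).symm

end Shelling

theorem stmt19_general {n m c : ℕ}
    (Fc : Fin m → Finset (Fin n))
    (hpure : ∀ i, (Fc i).card = c)
    (htree : (facetGraph Fc c).IsTree) :
    ((∀ a b : Fin m,
        ((facetGraph Fc c).induce {i : Fin m | Fc a ∩ Fc b ⊆ Fc i}).Connected) ↔
      (∀ (a b : Fin m) (p : (facetGraph Fc c).Walk a b), p.IsPath →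
        ∀ x y z : ℕ, x ≤ y → y ≤ z → z ≤ p.length →
          Fc (p.getVert x) ∩ Fc (p.getVert z) ⊆ Fc (p.getVert y))) ∧
    ((∀ a b : Fin m,
        ((facetGraph Fc c).induce {i : Fin m | Fc a ∩ Fc b ⊆ Fc i}).Connected) ↔
      Shellable Fc) := by
  rw [htree.connected_induce_iff_runningIntersection]
  exact ⟨forall_runningIntersection_iff_getVert,
    ⟨shellable_of_runningIntersection hpure htree, runningIntersection_of_shellable hpure htree⟩⟩

/-- Suppose the facet graph `G_Δ` of the pure simplicial complex `Δ` is a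
tree. Then the following are equivalent: (i) `Δ^{(F,G)}` (the subcomplex generated by the
facets containing `F ∩ G`) is connected in codimension one for all facets `F, G`;
(ii) along the (unique) path `F = L 0, L 1, …, L s = G` in `G_Δ` between any two facets,
`L i ∩ L k ⊆ L j` for all `i ≤ j ≤ k`; (iii) `Δ` is shellable. -/
theorem stmt19 {n m c : ℕ}
    (Fc : Fin m → Finset (Fin n)) (hinj : Function.Injective Fc)
    (hpure : ∀ i, (Fc i).card = c)
    (htree : (facetGraph Fc c).IsTree) :
    ((∀ a b : Fin m,
        ((facetGraph Fc c).induce {i : Fin m | Fc a ∩ Fc b ⊆ Fc i}).Connected) ↔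
      (∀ (a b : Fin m) (p : (facetGraph Fc c).Walk a b), p.IsPath →
        ∀ x y z : ℕ, x ≤ y → y ≤ z → z ≤ p.length →
          Fc (p.getVert x) ∩ Fc (p.getVert z) ⊆ Fc (p.getVert y))) ∧
    ((∀ a b : Fin m,
        ((facetGraph Fc c).induce {i : Fin m | Fc a ∩ Fc b ⊆ Fc i}).Connected) ↔
      Shellable Fc) :=
  stmt19_general Fc hpure htree
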